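/- Let β_c = log 4. Fix α > 0, b ∈ {1, 0, −1}, and k ∈ ℝ with b·K'(β_c) − k < 0. Define β_n = β_c + b/n^α, K_n = K(β_c) + k/n^α, and g(b,k) = (40β_c(k − K'(β_c)·b)/27)^{1/4}. Suppose (m_n) is a sequence of positive real numbers such that m_n → 0 and, for all sufficiently large n, m_n is a critical point of G_{β_n,K_n}, i.e., G'_{β_n,K_n}(m_n) = 0. Then n^{α/4}·m_n → g(b,k) as n → ∞; i.e., m_n ∼ g(b,k)/n^{α/4}. -/

import Mathlib

/-!
At a critical point `x ≠ 0` of `G_{β,K}`, with `c = 2βK`, the equation `G' = 0` reads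
`x (e^β + 2 cosh (c x)) = 2 sinh (c x)`. Expanding `cosh` to order four and `sinh` to order five
gives `x⁴ D = (2c - e^β - 2) + c² x² (c - 3) / 3` with `D → 3⁴ (2/24 - 6/120) = 27/10` as `x → 0`
and `c → 3`. Along the line `β = β_c + b ε`, `K = K(β_c) + k ε` both `2c - e^β - 2` and `c - 3`
vanish at `ε = 0`, so after dividing by `ε` the right-hand side tends to the derivative
`d/dε (4βK - e^β)` at `ε = 0`, which yields `x⁴ / ε → 40 β_c (k - K'(β_c) b) / 27`.
-/

open Real Filter

noncomputable def cgf (β t : ℝ) : ℝ :=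
  Real.log ((1 + Real.exp (-β) * (Real.exp t + Real.exp (-t))) / (1 + 2 * Real.exp (-β)))

noncomputable def freeEnergyG (β K x : ℝ) : ℝ := β * K * x ^ 2 - cgf β (2 * β * K * x)

noncomputable def Kcurve (β : ℝ) : ℝ := (Real.exp β + 2) / (4 * β)

noncomputable def c4coef (β : ℝ) : ℝ := (Real.exp β + 2) ^ 2 * (4 - Real.exp β) / (8 * 24)

open Topology

lemma cgf_eq (β : ℝ) :
    cgf β = fun t => log ((1 + 2 * exp (-β) * cosh t) / (1 + 2 * exp (-β))) := by
  funext t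
  rw [cgf, cosh_eq]
  ring_nf

lemma hasDerivAt_cgf (β t : ℝ) :
    HasDerivAt (cgf β) (2 * sinh t / (exp β + 2 * cosh t)) t := by
  have h := (((hasDerivAt_cosh t).const_mul (2 * exp (-β))).const_add 1).div_const
    (1 + 2 * exp (-β)) |>.log (by positivity)
  rw [cgf_eq]
  convert h using 1
  rw [exp_neg]
  field_simp

lemma deriv_freeEnergyG (β K x : ℝ) :
    deriv (freeEnergyG β K) x
      = 2 * β * K * (x - 2 * sinh (2 * β * K * x) / (exp β + 2 * cosh (2 * β * K * x))) := by
  have hlin : HasDerivAt (fun y => 2 * β * K * y) (2 * β * K) x := by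
    simpa using (hasDerivAt_id x).const_mul (2 * β * K)
  have h : HasDerivAt (freeEnergyG β K) _ x :=
    ((hasDerivAt_pow 2 x).const_mul (β * K)).sub ((hasDerivAt_cgf β _).comp x hlin)
  rw [h.deriv]
  push_cast
  ring

lemma deriv_freeEnergyG_eq_zero_iff {β K x : ℝ} (hβK : β * K ≠ 0) :
    deriv (freeEnergyG β K) x = 0
      ↔ x * (exp β + 2 * cosh (2 * β * K * x)) = 2 * sinh (2 * β * K * x) := by
  have hden : exp β + 2 * cosh (2 * β * K * x) ≠ 0 := by positivity
  rw [deriv_freeEnergyG, mul_eq_zero, sub_eq_zero, eq_div_iff hden]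
  constructor
  · rintro (h | h)
    · exact absurd (by linear_combination h / 2) hβK
    · exact h
  · exact Or.inr

lemma hasDerivAt_Kcurve {β : ℝ} (hβ : β ≠ 0) :
    HasDerivAt Kcurve ((exp β * β - (exp β + 2)) / (4 * β ^ 2)) β := by
  have h : HasDerivAt Kcurve _ β :=
    ((hasDerivAt_exp β).add_const 2).div ((hasDerivAt_id β).const_mul 4) (by simpa using hβ)
  convert h using 1
  field_simp

lemma Kcurve_log_four : Kcurve (log 4) = 3 / (2 * log 4) := by
  rw [Kcurve, exp_log (by norm_num)]
  field_simp
  norm_num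

lemma deriv_Kcurve_log_four :
    deriv Kcurve (log 4) = (4 * log 4 - 6) / (4 * log 4 ^ 2) := by
  rw [(hasDerivAt_Kcurve (log_pos (by norm_num : (1 : ℝ) < 4)).ne').deriv,
    exp_log (by norm_num)]
  ring

lemma abs_cosh_sub_taylor_le {x : ℝ} (hx : |x| ≤ 1) :
    |cosh x - (1 + x ^ 2 / 2 + x ^ 4 / 24)| ≤ |x| ^ 5 / 100 := by
  have hp := Real.exp_bound hx (n := 5) (by norm_num)
  have hm := Real.exp_bound (x := -x) (by rwa [abs_neg]) (n := 5) (by norm_num)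
  simp only [Finset.sum_range_succ, Finset.sum_range_zero, abs_neg] at hp hm
  norm_num [Nat.factorial] at hp hm
  rw [cosh_eq, abs_le]
  rw [abs_le] at hp hm
  constructor <;> linarith [hp.1, hp.2, hm.1, hm.2]

lemma abs_sinh_sub_taylor_le {x : ℝ} (hx : |x| ≤ 1) :
    |sinh x - (x + x ^ 3 / 6 + x ^ 5 / 120)| ≤ |x| ^ 6 * (7 / 4320) := by
  have hp := Real.exp_bound hx (n := 6) (by norm_num)
  have hm := Real.exp_bound (x := -x) (by rwa [abs_neg]) (n := 6) (by norm_num)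
  simp only [Finset.sum_range_succ, Finset.sum_range_zero, abs_neg] at hp hm
  norm_num [Nat.factorial] at hp hm
  rw [sinh_eq, abs_le]
  rw [abs_le] at hp hm
  constructor <;> linarith [hp.1, hp.2, hm.1, hm.2]

lemma tendsto_div_pow_of_abs_sub_le {f : ℝ → ℝ} {a C : ℝ} {n : ℕ}
    (hf : ∀ᶠ t in 𝓝 0, |f t - a * t ^ n| ≤ C * |t| ^ (n + 1)) :
    Tendsto (fun t => f t / t ^ n) (𝓝[≠] 0) (𝓝 a) := by
  have hC : Tendsto (fun t : ℝ => C * |t|) (𝓝[≠] 0) (𝓝 0) := by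
    have hcont : Continuous fun t : ℝ => C * |t| := continuous_const.mul continuous_abs
    simpa using (hcont.tendsto 0).mono_left nhdsWithin_le_nhds
  refine tendsto_iff_norm_sub_tendsto_zero.2 (squeeze_zero_norm' ?_ hC)
  filter_upwards [nhdsWithin_le_nhds hf, self_mem_nhdsWithin] with t ht ht0
  have htn : t ^ n ≠ 0 := pow_ne_zero n ht0
  have hsplit : f t / t ^ n - a = (f t - a * t ^ n) / t ^ n := by field_simp
  rw [norm_norm, Real.norm_eq_abs, hsplit, abs_div, abs_pow, div_le_iff₀ (pow_pos (abs_pos.2 ht0) n)]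
  calc _ ≤ C * |t| ^ (n + 1) := ht
    _ = C * |t| * |t| ^ n := by ring

lemma tendsto_cosh_sub_div_pow_four :
    Tendsto (fun t => (cosh t - 1 - t ^ 2 / 2) / t ^ 4) (𝓝[≠] 0) (𝓝 (1 / 24)) := by
  refine tendsto_div_pow_of_abs_sub_le (C := 1 / 100) ?_
  filter_upwards [Metric.closedBall_mem_nhds (0 : ℝ) one_pos] with t ht
  rw [Metric.mem_closedBall, dist_zero_right, Real.norm_eq_abs] at ht
  calc _ = |cosh t - (1 + t ^ 2 / 2 + t ^ 4 / 24)| := by ring_nf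
    _ ≤ _ := abs_cosh_sub_taylor_le ht
    _ = _ := by ring

lemma tendsto_sinh_sub_div_pow_five :
    Tendsto (fun t => (sinh t - t - t ^ 3 / 6) / t ^ 5) (𝓝[≠] 0) (𝓝 (1 / 120)) := by
  refine tendsto_div_pow_of_abs_sub_le (C := 7 / 4320) ?_
  filter_upwards [Metric.closedBall_mem_nhds (0 : ℝ) one_pos] with t ht
  rw [Metric.mem_closedBall, dist_zero_right, Real.norm_eq_abs] at ht
  calc _ = |sinh t - (t + t ^ 3 / 6 + t ^ 5 / 120)| := by ring_nf
    _ ≤ _ := abs_sinh_sub_taylor_le ht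
    _ = _ := by ring

lemma HasDerivAt.tendsto_div_of_eq_zero {ι : Type*} {l : Filter ι} {f : ℝ → ℝ} {f' : ℝ}
    (hf : HasDerivAt f f' 0) (h0 : f 0 = 0) {ε : ι → ℝ} (hε : Tendsto ε l (𝓝[≠] 0)) :
    Tendsto (fun i => f (ε i) / ε i) l (𝓝 f') := by
  simpa [h0, div_eq_inv_mul, Function.comp_def] using hf.tendsto_slope_zero.comp hε

lemma hasDerivAt_mul_line (β₀ K₀ b k : ℝ) :
    HasDerivAt (fun e => (β₀ + b * e) * (K₀ + k * e)) (b * K₀ + β₀ * k) 0 := by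
  have hβ := ((hasDerivAt_id (0 : ℝ)).const_mul b).const_add β₀
  have hK := ((hasDerivAt_id (0 : ℝ)).const_mul k).const_add K₀
  have h : HasDerivAt (fun e => (β₀ + b * e) * (K₀ + k * e)) _ 0 := hβ.mul hK
  convert h using 1
  simp

lemma tendsto_of_tendsto_sub_div {ι : Type*} {l : Filter ι} {f ε : ι → ℝ} {a B : ℝ}
    (hε : Tendsto ε l (𝓝[≠] 0)) (hf : Tendsto (fun i => (f i - a) / ε i) l (𝓝 B)) :
    Tendsto f l (𝓝 a) := by
  have h := ((tendsto_nhds_of_tendsto_nhdsWithin hε).mul hf).const_add a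
  rw [zero_mul, add_zero] at h
  refine h.congr' ?_
  filter_upwards [hε self_mem_nhdsWithin] with i (hi : ε i ≠ 0)
  rw [mul_div_cancel₀ _ hi, add_sub_cancel]

lemma pow_four_mul_remainders_eq_of_critical {E S C c x : ℝ} (hx : x ≠ 0) (hc : c ≠ 0)
    (h : x * (E + 2 * C) = 2 * S) :
    x ^ 4 * (c ^ 4 * (2 * ((C - 1 - (c * x) ^ 2 / 2) / (c * x) ^ 4)
        - 2 * c * ((S - c * x - (c * x) ^ 3 / 6) / (c * x) ^ 5)))
      = 2 * c - E - 2 + c ^ 2 * x ^ 2 * (c - 3) / 3 := by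
  field_simp
  linear_combination 18 * h

theorem tendsto_pow_four_div_of_critical {ι : Type*} {l : Filter ι} {β K ε x : ι → ℝ} {A B : ℝ}
    (hε : Tendsto ε l (𝓝[≠] 0)) (hx : Tendsto x l (𝓝[≠] 0))
    (hA : Tendsto (fun i => (4 * (β i * K i) - exp (β i) - 2) / ε i) l (𝓝 A))
    (hB : Tendsto (fun i => (2 * (β i * K i) - 3) / ε i) l (𝓝 B))
    (hcrit : ∀ᶠ i in l, x i * (exp (β i) + 2 * cosh (2 * β i * K i * x i))
      = 2 * sinh (2 * β i * K i * x i)) :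
    Tendsto (fun i => x i ^ 4 / ε i) l (𝓝 (10 * A / 27)) := by
  set c := fun i => 2 * β i * K i with hc_def
  have hε0 : ∀ᶠ i in l, ε i ≠ 0 := hε self_mem_nhdsWithin
  have hx0 : ∀ᶠ i in l, x i ≠ 0 := hx self_mem_nhdsWithin
  have hc : Tendsto c l (𝓝 3) :=
    tendsto_of_tendsto_sub_div hε (hB.congr fun i => by simp only [hc_def]; ring_nf)
  have hc0 : ∀ᶠ i in l, c i ≠ 0 := hc.eventually_ne (by norm_num)
  have ht : Tendsto (fun i => c i * x i) l (𝓝[≠] 0) := by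
    refine tendsto_nhdsWithin_iff.2 ⟨?_, ?_⟩
    · simpa using hc.mul (tendsto_nhds_of_tendsto_nhdsWithin hx)
    · filter_upwards [hc0, hx0] with i hci hxi
      exact mul_ne_zero hci hxi
  set D := fun i => c i ^ 4 * (2 * ((cosh (c i * x i) - 1 - (c i * x i) ^ 2 / 2) / (c i * x i) ^ 4)
      - 2 * c i * ((sinh (c i * x i) - c i * x i - (c i * x i) ^ 3 / 6) / (c i * x i) ^ 5))
  have hD : Tendsto D l (𝓝 (27 / 10)) := by
    have h := (hc.pow 4).mul (((tendsto_cosh_sub_div_pow_four.comp ht).const_mul 2).sub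
      ((hc.const_mul 2).mul (tendsto_sinh_sub_div_pow_five.comp ht)))
    rw [show (27 / 10 : ℝ) = 3 ^ 4 * (2 * (1 / 24) - 2 * 3 * (1 / 120)) by norm_num]
    exact h
  have hN : Tendsto (fun i => (4 * (β i * K i) - exp (β i) - 2) / ε i
      + c i ^ 2 * x i ^ 2 * ((2 * (β i * K i) - 3) / ε i) / 3) l (𝓝 (A + 3 ^ 2 * 0 ^ 2 * B / 3)) :=
    hA.add ((((hc.pow 2).mul ((tendsto_nhds_of_tendsto_nhdsWithin hx).pow 2)).mul hB).div_const 3)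
  have h := hN.div hD (by norm_num)
  rw [show (A + 3 ^ 2 * 0 ^ 2 * B / 3) / (27 / 10) = 10 * A / 27 by ring] at h
  refine h.congr' ?_
  filter_upwards [hcrit, hε0, hx0, hc0, hD.eventually_ne (by norm_num : (27 / 10 : ℝ) ≠ 0)]
    with i hi hεi hxi hci hDi
  have key : x i ^ 4 * D i = 2 * c i - exp (β i) - 2 + c i ^ 2 * x i ^ 2 * (c i - 3) / 3 :=
    pow_four_mul_remainders_eq_of_critical hxi hci hi
  rw [Pi.div_apply, div_eq_iff hDi, div_mul_eq_mul_div, key, hc_def]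
  field_simp
  ring

theorem tendsto_pow_four_div_of_deriv_freeEnergyG_eq_zero {ι : Type*} {l : Filter ι}
    {ε x : ι → ℝ} (b k : ℝ) (hε : Tendsto ε l (𝓝[≠] 0)) (hx : Tendsto x l (𝓝[≠] 0))
    (hcrit : ∀ᶠ i in l,
      deriv (freeEnergyG (log 4 + b * ε i) (Kcurve (log 4) + k * ε i)) (x i) = 0) :
    Tendsto (fun i => x i ^ 4 / ε i) l
      (𝓝 (40 * log 4 * (k - deriv Kcurve (log 4) * b) / 27)) := by
  have hline := hasDerivAt_mul_line (log 4) (Kcurve (log 4)) b k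
  have hexp : HasDerivAt (fun e => exp (log 4 + b * e)) (4 * b) 0 := by
    have h : HasDerivAt (fun e => exp (log 4 + b * e)) _ 0 :=
      (((hasDerivAt_id (0 : ℝ)).const_mul b).const_add (log 4)).exp
    convert h using 1
    simp [exp_log]
  have hA := (((hline.const_mul 4).sub hexp).sub_const 2).tendsto_div_of_eq_zero
    (by simp [exp_log, Kcurve_log_four]; field_simp; norm_num) hε
  have hB := ((hline.const_mul 2).sub_const 3).tendsto_div_of_eq_zero
    (by simp [Kcurve_log_four]; field_simp; norm_num) hε
  have hβK : ∀ᶠ i in l, (log 4 + b * ε i) * (Kcurve (log 4) + k * ε i) ≠ 0 :=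
    (hline.continuousAt.tendsto.comp (tendsto_nhds_of_tendsto_nhdsWithin hε)).eventually_ne
      (by norm_num [Kcurve_log_four])
  have hcrit' : ∀ᶠ i in l, x i * (exp (log 4 + b * ε i)
      + 2 * cosh (2 * (log 4 + b * ε i) * (Kcurve (log 4) + k * ε i) * x i))
      = 2 * sinh (2 * (log 4 + b * ε i) * (Kcurve (log 4) + k * ε i) * x i) := by
    filter_upwards [hcrit, hβK] with i hi hi'
    exact (deriv_freeEnergyG_eq_zero_iff hi').1 hi
  have hlim : 10 * (4 * (b * Kcurve (log 4) + log 4 * k) - 4 * b) / 27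
      = 40 * log 4 * (k - deriv Kcurve (log 4) * b) / 27 := by
    rw [deriv_Kcurve_log_four, Kcurve_log_four]
    field_simp
    ring
  rw [← hlim]
  exact tendsto_pow_four_div_of_critical (β := fun i => log 4 + b * ε i)
    (K := fun i => Kcurve (log 4) + k * ε i) hε hx hA hB hcrit'

lemma tendsto_inv_rpow_natCast_nhdsNE {α : ℝ} (hα : 0 < α) :
    Tendsto (fun n : ℕ => ((n : ℝ) ^ α)⁻¹) atTop (𝓝[≠] 0) := by
  refine tendsto_nhdsWithin_iff.2 ⟨?_, ?_⟩
  · exact ((tendsto_rpow_atTop hα).comp tendsto_natCast_atTop_atTop).inv_tendsto_atTop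
  · filter_upwards [eventually_ge_atTop 1] with n hn
    exact inv_ne_zero (rpow_pos_of_pos (by exact_mod_cast hn) α).ne'

lemma pow_four_div_inv_rpow_quarter {x y : ℝ} (hx : 0 ≤ x) (hy : 0 ≤ y) (α : ℝ) :
    (x ^ 4 / (y ^ α)⁻¹) ^ ((1 : ℝ) / 4) = y ^ (α / 4) * x := by
  rw [div_inv_eq_mul, mul_rpow (by positivity) (rpow_nonneg hy α), ← rpow_natCast,
    ← rpow_mul hx, ← rpow_mul hy]
  norm_num
  ring_nf

theorem stmt18_general (α b k : ℝ) (hα : 0 < α)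
    (m : ℕ → ℝ) (hmpos : ∀ n : ℕ, 0 < m n) (hm0 : Tendsto m atTop (nhds 0))
    (hcrit : ∀ᶠ n : ℕ in atTop,
      deriv (freeEnergyG (Real.log 4 + b / (n : ℝ) ^ α)
        (Kcurve (Real.log 4) + k / (n : ℝ) ^ α)) (m n) = 0) :
    Tendsto (fun n : ℕ => (n : ℝ) ^ (α / 4) * m n) atTop
      (nhds ((40 * Real.log 4 * (k - deriv Kcurve (Real.log 4) * b) / 27) ^ ((1 : ℝ) / 4))) := by
  have hm : Tendsto m atTop (𝓝[≠] 0) :=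
    tendsto_nhdsWithin_iff.2 ⟨hm0, Eventually.of_forall fun n => (hmpos n).ne'⟩
  simp only [div_eq_mul_inv] at hcrit
  have h4 := tendsto_pow_four_div_of_deriv_freeEnergyG_eq_zero b k
    (tendsto_inv_rpow_natCast_nhdsNE hα) hm hcrit
  have hroot (n : ℕ) : (m n ^ 4 / ((n : ℝ) ^ α)⁻¹) ^ ((1 : ℝ) / 4) = (n : ℝ) ^ (α / 4) * m n :=
    pow_four_div_inv_rpow_quarter (hmpos n).le n.cast_nonneg α
  simpa only [hroot] using h4.rpow_const (p := 1 / 4) (Or.inr (by norm_num))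

/-- exact asymptotics of positive critical points of
`G_{β_n,K_n}` for the sequence converging to the tricritical point:
`m_n ∼ g(b,k)/n^{α/4}`. -/
theorem stmt18 (α b k : ℝ) (hα : 0 < α) (hb : b = 1 ∨ b = 0 ∨ b = -1)
    (hk : b * deriv Kcurve (Real.log 4) - k < 0)
    (m : ℕ → ℝ) (hmpos : ∀ n : ℕ, 0 < m n) (hm0 : Tendsto m atTop (nhds 0))
    (hcrit : ∀ᶠ n : ℕ in atTop,
      deriv (freeEnergyG (Real.log 4 + b / (n : ℝ) ^ α)
        (Kcurve (Real.log 4) + k / (n : ℝ) ^ α)) (m n) = 0) :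
    Tendsto (fun n : ℕ => (n : ℝ) ^ (α / 4) * m n) atTop
      (nhds ((40 * Real.log 4 * (k - deriv Kcurve (Real.log 4) * b) / 27) ^ ((1 : ℝ) / 4))) :=
  stmt18_general α b k hα m hmpos hm0 hcrit
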